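/- Let P be a row-stochastic matrix with stationary distribution ν such that ‖(I − P + 1νᵀ)^{-1}‖_∞ ≤ 2 t_mix, and let r ∈ [0,1]^S with v̄ := νᵀr. Then the vector v* := (I − P + 1νᵀ)^{-1}(r − v̄·1) satisfies νᵀv* = 0, (I − P)v* = r − v̄·1, and ‖v*‖_∞ ≤ 2 t_mix. -/

import Mathlib

/-! Write `A = I - P + 1νᵀ`. Stationarity and `νᵀ1 = 1` give `νᵀA = νᵀ`, hence `νᵀB = νᵀ`
since `AB = I`, and so `νᵀv* = νᵀ(r - v̄1) = 0`. The rank-one part `1νᵀ` therefore annihilates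
`v*`, and `(I - P)v* = Av* = r - v̄1`. Finally `r - v̄1` has entries in `[-1, 1]`, so
`‖v*‖_∞ ≤ ‖B‖_∞ ≤ 2 t_mix`. -/

open Finset

/-- ℓ∞ norm of a vector over a nonempty fintype. -/
noncomputable def linf {S : Type*} [Fintype S] [Nonempty S] (v : S → ℝ) : ℝ :=
  Finset.univ.sup' Finset.univ_nonempty (fun i => |v i|)

/-- Operator ∞-norm of a matrix: maximum absolute row sum. -/
noncomputable def matNormInf {S : Type*} [Fintype S] [Nonempty S] (A : Matrix S S ℝ) : ℝ :=
  Finset.univ.sup' Finset.univ_nonempty (fun i => ∑ j, |A i j|)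

open Matrix

section RankOne

variable {S R : Type*} [Fintype S] [CommRing R]

lemma of_const_rows_mulVec (ν v : S → R) :
    (Matrix.of (fun _ j => ν j) : Matrix S S R) *ᵥ v = fun _ => ν ⬝ᵥ v := rfl

lemma vecMul_of_const_rows (ν w : S → R) :
    w ᵥ* (Matrix.of (fun _ j => ν j) : Matrix S S R) = (∑ i, w i) • ν := by
  ext j
  simp [vecMul, dotProduct, sum_mul]

lemma add_of_const_rows_mulVec_of_dotProduct_eq_zero (M : Matrix S S R) {ν v : S → R}
    (h : ν ⬝ᵥ v = 0) : (M + Matrix.of (fun _ j => ν j)) *ᵥ v = M *ᵥ v := by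
  rw [add_mulVec, of_const_rows_mulVec, h]
  exact add_zero _

lemma dotProduct_mulVec_of_vecMul_eq {B : Matrix S S R} {ν : S → R} (hB : ν ᵥ* B = ν)
    (x : S → R) : ν ⬝ᵥ (B *ᵥ x) = ν ⬝ᵥ x := by
  rw [dotProduct_mulVec, hB]

lemma dotProduct_sub_dotProduct_eq_zero {ν : S → R} (hνsum : ∑ i, ν i = 1) (r : S → R) :
    ν ⬝ᵥ (fun i => r i - ν ⬝ᵥ r) = 0 := by
  simp only [dotProduct, mul_sub, sum_sub_distrib, ← sum_mul, hνsum, one_mul]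
  exact sub_self _

variable [DecidableEq S]

lemma vecMul_one_sub_add_of_const_rows {P : Matrix S S R} {ν : S → R}
    (hνsum : ∑ i, ν i = 1) (hstat : ν ᵥ* P = ν) :
    ν ᵥ* (1 - P + Matrix.of (fun _ j => ν j)) = ν := by
  rw [vecMul_add, vecMul_sub, vecMul_one, hstat, vecMul_of_const_rows, hνsum, one_smul,
    sub_self, zero_add]

lemma vecMul_eq_of_mul_eq_one {A B : Matrix S S R} {ν : S → R}
    (hA : ν ᵥ* A = ν) (hAB : A * B = 1) : ν ᵥ* B = ν := by
  calc ν ᵥ* B = (ν ᵥ* A) ᵥ* B := by rw [hA]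
    _ = ν := by rw [vecMul_vecMul, hAB, vecMul_one]

end RankOne

lemma dotProduct_mem_Icc_of_mem_Icc {S : Type*} [Fintype S] {ν r : S → ℝ}
    (hνnn : ∀ i, 0 ≤ ν i) (hνsum : ∑ i, ν i = 1) (hr : ∀ i, 0 ≤ r i ∧ r i ≤ 1) :
    0 ≤ ν ⬝ᵥ r ∧ ν ⬝ᵥ r ≤ 1 := by
  refine ⟨sum_nonneg fun i _ => mul_nonneg (hνnn i) (hr i).1, ?_⟩
  rw [← hνsum]
  exact sum_le_sum fun i _ => mul_le_of_le_one_right (hνnn i) (hr i).2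

section SupNorm

variable {S : Type*} [Fintype S] [Nonempty S]

lemma abs_le_linf (v : S → ℝ) (i : S) : |v i| ≤ linf v :=
  le_sup' (fun i => |v i|) (mem_univ i)

lemma linf_le_iff {v : S → ℝ} {c : ℝ} : linf v ≤ c ↔ ∀ i, |v i| ≤ c := by
  simp [linf, sup'_le_iff]

lemma matNormInf_nonneg (B : Matrix S S ℝ) : 0 ≤ matNormInf B :=
  let i := Classical.arbitrary S
  (sum_nonneg fun j _ => abs_nonneg (B i j)).trans
    (le_sup' (fun i => ∑ j, |B i j|) (mem_univ i))

lemma linf_mulVec_le (B : Matrix S S ℝ) (x : S → ℝ) :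
    linf (B *ᵥ x) ≤ matNormInf B * linf x := by
  refine linf_le_iff.2 fun i => ?_
  calc |(B *ᵥ x) i| ≤ ∑ j, |B i j| * |x j| := by
        simpa only [mulVec, dotProduct, abs_mul] using
          abs_sum_le_sum_abs (fun j => B i j * x j) univ
    _ ≤ ∑ j, |B i j| * linf x :=
        sum_le_sum fun j _ => mul_le_mul_of_nonneg_left (abs_le_linf x j) (abs_nonneg _)
    _ = (∑ j, |B i j|) * linf x := (sum_mul _ _ _).symm
    _ ≤ matNormInf B * linf x :=
        mul_le_mul_of_nonneg_right (le_sup' (fun i => ∑ j, |B i j|) (mem_univ i))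
          ((abs_nonneg _).trans (abs_le_linf x i))

lemma linf_sub_const_le_one {r : S → ℝ} (hr : ∀ i, 0 ≤ r i ∧ r i ≤ 1) {c : ℝ}
    (hc : 0 ≤ c ∧ c ≤ 1) : linf (fun i => r i - c) ≤ 1 :=
  linf_le_iff.2 fun i => abs_le.2 ⟨by linarith [(hr i).1, hc.2], by linarith [(hr i).2, hc.1]⟩

end SupNorm

theorem stmt4_general {S : Type*} [Fintype S] [DecidableEq S] [Nonempty S]
    (P : Matrix S S ℝ)
    (ν : S → ℝ) (hνnn : ∀ i, 0 ≤ ν i) (hνsum : ∑ i, ν i = 1)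
    (hstat : ∀ j, ∑ i, ν i * P i j = ν j)
    (tmix : ℕ)
    (B : Matrix S S ℝ)
    (hB1 : (1 - P + Matrix.of (fun _ j => ν j)) * B = 1)
    (hBnorm : matNormInf B ≤ 2 * tmix)
    (r : S → ℝ) (hr : ∀ i, 0 ≤ r i ∧ r i ≤ 1)
    (vbar : ℝ) (hvbar : vbar = ∑ i, ν i * r i)
    (vstar : S → ℝ) (hvstar : vstar = B.mulVec (fun i => r i - vbar)) :
    (∑ i, ν i * vstar i = 0) ∧
    ((1 - P).mulVec vstar = fun i => r i - vbar) ∧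
    linf vstar ≤ 2 * tmix := by
  have hνB : ν ᵥ* B = ν :=
    vecMul_eq_of_mul_eq_one (vecMul_one_sub_add_of_const_rows hνsum (funext hstat)) hB1
  have hmean : ν ⬝ᵥ vstar = 0 := by
    rw [hvstar, dotProduct_mulVec_of_vecMul_eq hνB, hvbar]
    exact dotProduct_sub_dotProduct_eq_zero hνsum r
  have hvbar_mem : 0 ≤ vbar ∧ vbar ≤ 1 :=
    hvbar ▸ dotProduct_mem_Icc_of_mem_Icc hνnn hνsum hr
  refine ⟨hmean, ?_, ?_⟩
  · rw [← add_of_const_rows_mulVec_of_dotProduct_eq_zero (1 - P) hmean, hvstar, mulVec_mulVec,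
      hB1, one_mulVec]
  · calc linf vstar ≤ matNormInf B * 1 :=
          hvstar ▸ (linf_mulVec_le B _).trans
            (mul_le_mul_of_nonneg_left (linf_sub_const_le_one hr hvbar_mem) (matNormInf_nonneg B))
      _ ≤ 2 * tmix := by rw [mul_one]; exact hBnorm

theorem stmt4 {S : Type*} [Fintype S] [DecidableEq S] [Nonempty S]
    (P : Matrix S S ℝ) (hPnn : ∀ i j, 0 ≤ P i j) (hProw : ∀ i, ∑ j, P i j = 1)
    (ν : S → ℝ) (hνnn : ∀ i, 0 ≤ ν i) (hνsum : ∑ i, ν i = 1)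
    (hstat : ∀ j, ∑ i, ν i * P i j = ν j)
    (tmix : ℕ) (htmix : 0 < tmix)
    (B : Matrix S S ℝ)
    (hB1 : (1 - P + Matrix.of (fun _ j => ν j)) * B = 1)
    (hB2 : B * (1 - P + Matrix.of (fun _ j => ν j)) = 1)
    (hBnorm : matNormInf B ≤ 2 * tmix)
    (r : S → ℝ) (hr : ∀ i, 0 ≤ r i ∧ r i ≤ 1)
    (vbar : ℝ) (hvbar : vbar = ∑ i, ν i * r i)
    (vstar : S → ℝ) (hvstar : vstar = B.mulVec (fun i => r i - vbar)) :
    (∑ i, ν i * vstar i = 0) ∧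
    ((1 - P).mulVec vstar = fun i => r i - vbar) ∧
    linf vstar ≤ 2 * tmix :=
  stmt4_general P ν hνnn hνsum hstat tmix B hB1 hBnorm r hr vbar hvbar vstar hvstar
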